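/- arXiv:1910.06354 — 2 statements merged into one kernel-verified Lean document; each statement's English description precedes it below -/
import Mathlib

section
/- Let L ≥ 2, φ ∈ ℝ, and let E_N(φ) denote the sum of the N smallest values among {−2cos((2πl+φ)/L) : l = 0,…,L−1} (counted with multiplicity). If N is odd, then E_N(0) ≤ E_N(φ) for all φ; if N is even, then E_N(π) ≤ E_N(φ) for all φ. -/
/-!
Shifting the flux by `2π` only permutes the levels, so `ringEnergy L N` is `2π`-periodic and
it suffices to look at fluxes `ψ ∈ [-Nπ, (2-N)π]`. For those the `N` lowest levels are the ones
with `l < N`: their angles `(2πl+ψ)/L` lie within `Nπ/L` of `0 (mod 2π)`, and all the others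
do not.
Lagrange's formula for a sum of cosines in arithmetic progression then gives
`sin(π/L) · E_N(ψ) = -2 sin(Nπ/L) cos((ψ + (N-1)π)/L)`, which is least at `ψ = (1-N)π`,
and `(1-N)π` is `0` mod `2π` for odd `N` and `π` mod `2π` for even `N`.
When `N ≥ L` every level is filled and the levels sum to zero.
-/

open Real

/-- The multiset of single-particle energies `-2 cos((2πl+φ)/L)`, `l = 0, …, L-1`,
of a spinless fermion on an `L`-site ring threaded by flux `φ`. -/
noncomputable def ringLevels (L : ℕ) (φ : ℝ) : Multiset ℝ :=
  (Finset.range L).val.map (fun l => -2 * Real.cos ((2 * π * l + φ) / L))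

/-- The ground-state energy of `N` spinless free fermions on an `L`-site ring with flux `φ`:
the sum of the `N` smallest single-particle energies (with multiplicity). -/
noncomputable def ringEnergy (L N : ℕ) (φ : ℝ) : ℝ :=
  (((ringLevels L φ).sort (· ≤ ·)).take N).sum

open Finset

namespace Multiset

theorem sort_add_of_forall_le {α : Type*} [LinearOrder α] {s t : Multiset α}
    (h : ∀ a ∈ s, ∀ b ∈ t, a ≤ b) :
    (s + t).sort (· ≤ ·) = s.sort (· ≤ ·) ++ t.sort (· ≤ ·) := by
  conv_lhs => rw [← s.sort_eq (· ≤ ·), ← t.sort_eq (· ≤ ·), coe_add, coe_sort]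
  refine List.mergeSort_eq_self _ (List.pairwise_append.2
    ⟨s.pairwise_sort _, t.pairwise_sort _, fun a ha b hb => h a ?_ b ?_⟩)
  · exact (mem_sort _).1 ha
  · exact (mem_sort _).1 hb

theorem sum_take_sort_add_of_forall_le {α : Type*} [LinearOrder α] [AddCommMonoid α]
    {s t : Multiset α} (h : ∀ a ∈ s, ∀ b ∈ t, a ≤ b) :
    (((s + t).sort (· ≤ ·)).take (card s)).sum = s.sum := by
  rw [sort_add_of_forall_le h, List.take_left' (length_sort _), ← sum_coe, sort_eq]

theorem map_range_add_one {α : Type*} (f : ℕ → α) {n : ℕ} (h : f n = f 0) :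
    (range n).map (fun i => f (i + 1)) = (range n).map f := by
  cases n with
  | zero => rfl
  | succ n =>
    conv_rhs => rw [← coe_range, List.range_succ_eq_map]
    rw [range_succ, map_cons, h, ← coe_range]
    simp [Function.comp_def]

end Multiset

theorem Real.sin_half_mul_sum_range_cos (x d : ℝ) (n : ℕ) :
    sin (d / 2) * ∑ i ∈ range n, cos (x + i * d)
      = sin (n * d / 2) * cos (x + (n - 1) * d / 2) := by
  have telescope : ∀ i : ℕ, 2 * sin (d / 2) * cos (x + i * d)
      = sin (x + (i + 1 : ℕ) * d - d / 2) - sin (x + i * d - d / 2) := by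
    intro i
    rw [sin_sub_sin]
    push_cast
    ring_nf
  have h := sum_range_sub (fun i : ℕ => sin (x + i * d - d / 2)) n
  simp only [← telescope, ← mul_sum, Nat.cast_zero, zero_mul, add_zero, sin_sub_sin] at h
  rw [show (x + n * d - d / 2 - (x - d / 2)) / 2 = n * d / 2 by ring,
    show (x + n * d - d / 2 + (x - d / 2)) / 2 = x + (n - 1) * d / 2 by ring] at h
  linarith

theorem Real.cos_le_cos_of_le_of_le_two_pi_sub {a x : ℝ} (ha : 0 ≤ a) (h₁ : a ≤ x)
    (h₂ : x ≤ 2 * π - a) : cos x ≤ cos a := by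
  rcases le_total x π with hx | hx
  · exact cos_le_cos_of_nonneg_of_le_pi ha hx h₁
  · rw [← cos_two_pi_sub x]
    exact cos_le_cos_of_nonneg_of_le_pi ha (by linarith) (by linarith)

-- `ringLevels` maps over the range after coercing it to a multiset of reals.
theorem ringLevels_eq_map (L : ℕ) (φ : ℝ) :
    ringLevels L φ = (Multiset.range L).map fun l : ℕ => -2 * cos ((2 * π * l + φ) / L) := by
  simp [ringLevels, Multiset.map_map]

theorem ringLevels_periodic (L : ℕ) : Function.Periodic (ringLevels L) (2 * π) := by
  intro φ
  rcases L.eq_zero_or_pos with rfl | hL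
  · rfl
  have hL' : (L : ℝ) ≠ 0 := by positivity
  rw [ringLevels_eq_map, ringLevels_eq_map,
    ← Multiset.map_range_add_one (fun l : ℕ => -2 * cos ((2 * π * l + φ) / L))]
  · congr! 4 with l
    push_cast
    ring
  · rw [show (2 * π * L + φ) / L = (2 * π * (0 : ℕ) + φ) / L + 2 * π by
      field_simp; push_cast; ring, cos_add_two_pi]

theorem ringEnergy_periodic (L N : ℕ) : Function.Periodic (ringEnergy L N) (2 * π) :=
  (ringLevels_periodic L).comp fun M => ((M.sort (· ≤ ·)).take N).sum

theorem sin_pi_div_mul_sum_range_cos (L n : ℕ) (φ : ℝ) :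
    sin (π / L) * ∑ i ∈ range n, cos ((2 * π * i + φ) / L)
      = sin (n * π / L) * cos ((φ + (n - 1) * π) / L) := by
  convert sin_half_mul_sum_range_cos (φ / L) (2 * π / L) n using 3 <;> ring_nf

theorem sum_ringLevels {L : ℕ} (hL : 2 ≤ L) (φ : ℝ) : (ringLevels L φ).sum = 0 := by
  have hsin : sin (π / L) ≠ 0 := (sin_pos_of_pos_of_lt_pi (by positivity)
    (div_lt_self pi_pos (by exact_mod_cast hL))).ne'
  have h := sin_pi_div_mul_sum_range_cos L L φ
  rw [mul_div_cancel_left₀ π (by positivity), sin_pi, zero_mul, mul_eq_zero] at h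
  rw [ringLevels_eq_map, ← range_val, ← sum_eq_multiset_sum, ← mul_sum, h.resolve_left hsin,
    mul_zero]

theorem ringEnergy_of_le {L N : ℕ} (hLN : L ≤ N) (φ : ℝ) :
    ringEnergy L N φ = (ringLevels L φ).sum := by
  rw [ringEnergy, List.take_of_length_le, ← Multiset.sum_coe, Multiset.sort_eq]
  rwa [Multiset.length_sort, ringLevels_eq_map, Multiset.card_map, Multiset.card_range]

section Window

/-! Throughout, `ψ` lies in the window `[-Nπ, (2-N)π]`, where `|2πi + ψ| ≤ Nπ` for `i < N`
and `Nπ ≤ 2πi + ψ ≤ 2πL - Nπ` for `N ≤ i < L`. -/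

variable {L N : ℕ} {ψ : ℝ}

theorem cos_mul_pi_div_le_cos_of_lt (hL : 0 < L) (hNL : N ≤ L) (h₁ : -(N * π) ≤ ψ)
    (h₂ : ψ ≤ (2 - N) * π) {i : ℕ} (hi : i < N) :
    cos (N * π / L) ≤ cos ((2 * π * i + ψ) / L) := by
  have hL' : (0 : ℝ) < L := by exact_mod_cast hL
  have hi' : (i : ℝ) + 1 ≤ N := by exact_mod_cast hi
  have hNL' : (N : ℝ) ≤ L := by exact_mod_cast hNL
  have habs : |2 * π * i + ψ| ≤ N * π :=
    abs_le.2 ⟨by nlinarith [pi_pos], by nlinarith [pi_pos]⟩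
  rw [← cos_abs ((2 * π * i + ψ) / L), abs_div, abs_of_pos hL']
  exact cos_le_cos_of_nonneg_of_le_pi (by positivity)
    ((div_le_iff₀ hL').2 (by nlinarith [pi_pos])) (div_le_div_of_nonneg_right habs hL'.le)

theorem cos_le_cos_mul_pi_div_of_le (hL : 0 < L) (h₁ : -(N * π) ≤ ψ)
    (h₂ : ψ ≤ (2 - N) * π) {i : ℕ} (hNi : N ≤ i) (hiL : i < L) :
    cos ((2 * π * i + ψ) / L) ≤ cos (N * π / L) := by
  have hL' : (0 : ℝ) < L := by exact_mod_cast hL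
  have hNi' : (N : ℝ) ≤ i := by exact_mod_cast hNi
  have hiL' : (i : ℝ) + 1 ≤ L := by exact_mod_cast hiL
  refine cos_le_cos_of_le_of_le_two_pi_sub (by positivity) ?_ ?_
  · gcongr
    nlinarith [pi_pos]
  · rw [show 2 * π - N * π / L = (2 * π * L - N * π) / L by field_simp]
    gcongr
    nlinarith [pi_pos]

theorem ringEnergy_eq_sum_range (hL : 0 < L) (hNL : N ≤ L) (h₁ : -(N * π) ≤ ψ)
    (h₂ : ψ ≤ (2 - N) * π) :
    ringEnergy L N ψ = ∑ i ∈ range N, -2 * cos ((2 * π * i + ψ) / L) := by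
  obtain ⟨m, rfl⟩ := Nat.exists_eq_add_of_le hNL
  set f : ℕ → ℝ := fun l => -2 * cos ((2 * π * l + ψ) / (N + m : ℕ))
  have h := Multiset.sum_take_sort_add_of_forall_le
    (s := (Multiset.range N).map f) (t := ((Multiset.range m).map (N + ·)).map f) ?_
  · rwa [Multiset.card_map, Multiset.card_range, ← Multiset.map_add, ← Multiset.range_add,
      ← ringLevels_eq_map] at h
  · simp only [Multiset.mem_map, Multiset.mem_range]
    rintro _ ⟨i, hi, rfl⟩ _ ⟨_, ⟨j, hj, rfl⟩, rfl⟩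
    have := cos_mul_pi_div_le_cos_of_lt hL hNL h₁ h₂ hi
    have := cos_le_cos_mul_pi_div_of_le hL h₁ h₂ (i := N + j) (by omega) (by omega)
    simp only [f]
    linarith

theorem sin_pi_div_mul_ringEnergy (hL : 0 < L) (hNL : N ≤ L) (h₁ : -(N * π) ≤ ψ)
    (h₂ : ψ ≤ (2 - N) * π) :
    sin (π / L) * ringEnergy L N ψ = -2 * sin (N * π / L) * cos ((ψ + (N - 1) * π) / L) := by
  rw [ringEnergy_eq_sum_range hL hNL h₁ h₂, ← mul_sum, mul_left_comm,
    sin_pi_div_mul_sum_range_cos, mul_assoc]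

end Window

theorem ringEnergy_one_sub_mul_pi_le {L : ℕ} (hL : 2 ≤ L) (N : ℕ) (φ : ℝ) :
    ringEnergy L N ((1 - N) * π) ≤ ringEnergy L N φ := by
  rcases le_or_gt N L with hNL | hLN
  · obtain ⟨ψ, ⟨h₁, h₂⟩, hφψ⟩ :=
      (ringEnergy_periodic L N).exists_mem_Ico two_pi_pos φ (-(N * π))
    have hL₀ : 0 < L := by omega
    have hsin : 0 < sin (π / L) := sin_pos_of_pos_of_lt_pi (by positivity)
      (div_lt_self pi_pos (by exact_mod_cast hL))
    have hsinN : 0 ≤ sin (N * π / L) := sin_nonneg_of_nonneg_of_le_pi (by positivity)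
      ((div_le_iff₀ (by positivity)).2 (by rw [mul_comm π]; gcongr))
    refine hφψ ▸ le_of_mul_le_mul_left ?_ hsin
    rw [sin_pi_div_mul_ringEnergy hL₀ hNL (by linarith [pi_pos]) (by linarith),
      sin_pi_div_mul_ringEnergy hL₀ hNL h₁ (by linarith),
      show (1 - N) * π + (N - 1) * π = 0 by ring, zero_div, cos_zero]
    nlinarith [cos_le_one ((ψ + (N - 1) * π) / L)]
  · rw [ringEnergy_of_le hLN.le, ringEnergy_of_le hLN.le, sum_ringLevels hL, sum_ringLevels hL]

theorem stmt_13 (L : ℕ) (hL : 2 ≤ L) (N : ℕ) :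
    (Odd N → ∀ φ : ℝ, ringEnergy L N 0 ≤ ringEnergy L N φ) ∧
    (Even N → ∀ φ : ℝ, ringEnergy L N π ≤ ringEnergy L N φ) := by
  refine ⟨fun ⟨m, hm⟩ φ => ?_, fun ⟨m, hm⟩ φ => ?_⟩
  · have hshift := (ringEnergy_periodic L N).int_mul_eq (-m)
    rw [show ((-m : ℤ) : ℝ) * (2 * π) = (1 - N) * π by subst hm; push_cast; ring] at hshift
    exact hshift ▸ ringEnergy_one_sub_mul_pi_le hL N φ
  · have hshift := (ringEnergy_periodic L N).sub_int_mul_eq (x := π) m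
    rw [show π - (m : ℤ) * (2 * π) = (1 - N) * π by subst hm; push_cast; ring] at hshift
    exact hshift ▸ ringEnergy_one_sub_mul_pi_le hL N φ
end

section
/- Let n ≥ 1, L = 4n+3, and let E(φ) = E_{2n+2}(φ) + E_{2n+1}(φ), where E_N(φ) is the sum of the N smallest values among {−2cos((2πl+φ)/L) : 0 ≤ l ≤ L−1}. Then E attains its minimum over [0, 2π) exactly at φ = π/2 and φ = 3π/2. -/
open Real

/-!
The `N` lowest levels form a cyclic arc of consecutive momenta, so each `E_N` is a sum of `cos`
over an arithmetic progression, which has a closed form. For `L = 4n + 3` the arcs of lengths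
`2n + 2` and `2n + 1` carry the same prefactor `sin (π N / L) / sin (π / L)`, and the
sum-to-product formula gives `E(φ) = -K cos ((φ - φ₀) / L)` with `K > 0`, where `φ₀ = π/2` on
`[0, π]` and `φ₀ = 3π/2` on `[π, 2π]`. As `|φ - φ₀| ≤ π/2`, the minimum `-K` is attained
exactly at `φ₀`.
-/

theorem Multiset.sum_take_sort_add {α : Type*} [LinearOrder α] [AddCommMonoid α]
    (s t : Multiset α) (h : ∀ a ∈ s, ∀ b ∈ t, a ≤ b) :
    (((s + t).sort (· ≤ ·)).take (Multiset.card s)).sum = s.sum := by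
  have hsort : (s + t).sort (· ≤ ·) = s.sort (· ≤ ·) ++ t.sort (· ≤ ·) := by
    refine List.Perm.eq_of_pairwise' (Multiset.pairwise_sort _ _) ?_ ?_
    · refine List.pairwise_append.mpr ⟨Multiset.pairwise_sort _ _, Multiset.pairwise_sort _ _,
        fun a ha b hb => h a ((Multiset.mem_sort _).mp ha) b ((Multiset.mem_sort _).mp hb)⟩
    · rw [← Multiset.coe_eq_coe, ← Multiset.coe_add, Multiset.sort_eq, Multiset.sort_eq,
        Multiset.sort_eq]
  rw [hsort, List.take_left' (Multiset.length_sort _), ← Multiset.sum_coe, Multiset.sort_eq]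

noncomputable def ringLevel (L : ℕ) (φ x : ℝ) : ℝ := -2 * cos ((2 * π * x + φ) / L)

theorem ringLevel_add_period {L : ℕ} (hL : L ≠ 0) (φ x : ℝ) :
    ringLevel L φ (x + L) = ringLevel L φ x := by
  have : (2 * π * (x + L) + φ) / L = (2 * π * x + φ) / L + 2 * π := by field_simp; ring
  rw [ringLevel, ringLevel, this, cos_add_two_pi]

theorem map_ringLevel_add_one (L : ℕ) (φ x : ℝ) :
    (Multiset.range L).map (fun j : ℕ => ringLevel L φ (x + 1 + j))
      = (Multiset.range L).map (fun j : ℕ => ringLevel L φ (x + j)) := by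
  cases L with
  | zero => rfl
  | succ k =>
    have hwrap : ringLevel (k + 1) φ (x + 1 + k) = ringLevel (k + 1) φ x := by
      rw [← ringLevel_add_period k.succ_ne_zero φ x]; congr 1; push_cast; ring
    have hrange : Multiset.range (k + 1) = 0 ::ₘ (Multiset.range k).map Nat.succ := by
      simp [Multiset.range, List.range_succ_eq_map]
    conv_rhs => rw [hrange]
    rw [Multiset.range_succ, Multiset.map_cons, Multiset.map_cons, Multiset.map_map, hwrap]
    simp only [Function.comp_def, Nat.cast_zero, add_zero, Nat.cast_succ]
    ring_nf

theorem ringLevels_eq_map_add (L : ℕ) (φ : ℝ) (c : ℤ) :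
    ringLevels L φ = (Multiset.range L).map (fun j : ℕ => ringLevel L φ (c + j)) := by
  induction c using Int.induction_on with
  | zero => simp [ringLevels, ringLevel]
  | succ i ih => push_cast; rw [map_ringLevel_add_one, ih]; norm_cast
  | pred i ih => rw [ih, ← map_ringLevel_add_one L φ ((-i - 1 : ℤ) : ℝ)]; push_cast; ring_nf

theorem cos_le_cos_of_abs_le {u v : ℝ} (h₁ : |u| ≤ v) (h₂ : v ≤ 2 * π - |u|) :
    cos v ≤ cos u := by
  rw [← cos_abs u]
  rcases le_or_gt v π with hv | hv
  · exact cos_le_cos_of_nonneg_of_le_pi (abs_nonneg u) hv h₁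
  · rw [← cos_two_pi_sub v]
    exact cos_le_cos_of_nonneg_of_le_pi (abs_nonneg u) (by linarith) (by linarith)

theorem ringLevel_le_of_mem_arc {L m : ℕ} (hL : 0 < L) {φ c a b : ℝ}
    (hφ : |2 * π * c + π * (m - 1) + φ| ≤ π) (ha : c ≤ a) (ha' : a ≤ c + m - 1)
    (hb : c + m ≤ b) (hb' : b ≤ c + L - 1) :
    ringLevel L φ a ≤ ringLevel L φ b := by
  have hL' : (0 : ℝ) < L := by exact_mod_cast hL
  have hπ := pi_pos
  rw [abs_le] at hφ
  have hA : |2 * π * a + φ| ≤ π * m := abs_le.mpr ⟨by nlinarith, by nlinarith⟩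
  have hB : π * m ≤ 2 * π * b + φ := by nlinarith
  have hB' : 2 * π * b + φ ≤ 2 * π * L - π * m := by nlinarith
  suffices cos ((2 * π * b + φ) / L) ≤ cos ((2 * π * a + φ) / L) by
    simp only [ringLevel]; linarith
  apply cos_le_cos_of_abs_le
  · rw [abs_div, abs_of_pos hL']
    exact div_le_div_of_nonneg_right (by linarith) hL'.le
  · rw [abs_div, abs_of_pos hL', le_sub_iff_add_le, ← add_div, div_le_iff₀ hL']
    linarith

theorem sin_mul_sum_ringLevel (L m : ℕ) (φ c : ℝ) :
    sin (π / L) * ∑ j ∈ Finset.range m, ringLevel L φ (c + j)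
      = -2 * sin (π * m / L) * cos ((2 * π * c + π * (m - 1) + φ) / L) := by
  have h := sin_mul_sum_cos m (2 * π / L) ((2 * π * c + φ) / L)
  have hsummand : ∀ j : ℕ, ringLevel L φ (c + j) = -2 * cos (2 * π / L * j + (2 * π * c + φ) / L) :=
    fun j => by rw [ringLevel]; ring_nf
  simp only [hsummand, ← Finset.mul_sum]
  rw [show 2 * π / L / 2 = π / L by ring, show (m : ℝ) * (2 * π / L) / 2 = π * m / L by ring,
    show ((m : ℝ) - 1) * (2 * π / L) / 2 + (2 * π * c + φ) / L
      = (2 * π * c + π * (m - 1) + φ) / L by ring] at h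
  linear_combination -2 * h

-- `hφ` puts the centre `c + (m - 1) / 2` of the arc at angle within `π / L` of `0`.
theorem ringEnergy_eq_sum_arc {L m : ℕ} (hm : m ≤ L) (φ : ℝ) (c : ℤ)
    (hφ : |2 * π * c + π * (m - 1) + φ| ≤ π) :
    ringEnergy L m φ = ∑ j ∈ Finset.range m, ringLevel L φ (c + j) := by
  obtain ⟨r, rfl⟩ := Nat.exists_eq_add_of_le hm
  have key := Multiset.sum_take_sort_add ((Multiset.range m).map fun j : ℕ => ringLevel (m + r) φ (c + j))
    ((Multiset.range r).map fun j : ℕ => ringLevel (m + r) φ (c + ↑(m + j))) ?_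
  · rw [Multiset.card_map, Multiset.card_range] at key
    rw [ringEnergy, ringLevels_eq_map_add _ _ c, Multiset.range_add, Multiset.map_add,
      Multiset.map_map]
    exact key
  · simp only [Multiset.mem_map, Multiset.mem_range]
    rintro _ ⟨i, hi, rfl⟩ _ ⟨j, hj, rfl⟩
    have hi' : (i : ℝ) + 1 ≤ m := by exact_mod_cast hi
    have hj' : (j : ℝ) + 1 ≤ r := by exact_mod_cast hj
    refine ringLevel_le_of_mem_arc (by omega) hφ (by simp) (by linarith) (by push_cast; simp) ?_
    push_cast; linarith

noncomputable def halfFillingEnergy (n : ℕ) (φ : ℝ) : ℝ :=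
  ringEnergy (4 * n + 3) (2 * n + 2) φ + ringEnergy (4 * n + 3) (2 * n + 1) φ

theorem sin_mul_halfFillingEnergy (n : ℕ) (k : ℤ) {φ : ℝ} (h₁ : |φ - π| ≤ π)
    (h₂ : |φ - 2 * π * k| ≤ π) :
    sin (π / (4 * n + 3)) * halfFillingEnergy n φ
      = -2 * sin (π * (2 * n + 1) / (4 * n + 3))
          * (cos ((φ - π) / (4 * n + 3)) + cos ((φ - 2 * π * k) / (4 * n + 3))) := by
  -- the lowest `2n+2` levels are `l ∈ [-n-1, n]`, the lowest `2n+1` are `l ∈ [-n-k, n-k]` (mod `L`)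
  rw [show (4 * n + 3 : ℝ) = ((4 * n + 3 : ℕ) : ℝ) by push_cast; ring, halfFillingEnergy, mul_add,
    ringEnergy_eq_sum_arc (m := 2 * n + 2) (by omega) φ (-(n + 1))
      (by convert h₁ using 2; push_cast; ring),
    ringEnergy_eq_sum_arc (m := 2 * n + 1) (by omega) φ (-n - k)
      (by convert h₂ using 2; push_cast; ring),
    sin_mul_sum_ringLevel, sin_mul_sum_ringLevel]
  have hsin : sin (π * (2 * n + 2) / (4 * n + 3)) = sin (π * (2 * n + 1) / (4 * n + 3)) := by
    rw [← sin_pi_sub]; congr 1; field_simp; ring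
  push_cast
  rw [hsin, show 2 * π * -(n + 1 : ℝ) + π * (2 * n + 2 - 1) + φ = φ - π by ring,
    show 2 * π * (-n - k : ℝ) + π * (2 * n + 1 - 1) + φ = φ - 2 * π * k by ring]
  ring

theorem halfFillingEnergy_eq (n : ℕ) {k : ℤ} (hk : k = 0 ∨ k = 1) {φ : ℝ}
    (hφ : |φ - (2 * k + 1) * π / 2| ≤ π / 2) :
    halfFillingEnergy n φ = -(2 * sin (π * (2 * n + 1) / (4 * n + 3)) / sin (π / (2 * (4 * n + 3))))
      * cos ((φ - (2 * k + 1) * π / 2) / (4 * n + 3)) := by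
  have hk' : (k : ℝ) = 0 ∨ (k : ℝ) = 1 := by rcases hk with rfl | rfl <;> simp
  have hφ' : |φ - π| ≤ π ∧ |φ - 2 * π * k| ≤ π := by
    simp only [abs_le] at hφ ⊢
    rcases hk' with h | h <;> rw [h] at hφ ⊢ <;> refine ⟨⟨?_, ?_⟩, ?_, ?_⟩ <;> linarith
  have h := sin_mul_halfFillingEnergy n k hφ'.1 hφ'.2
  have hL : (1 : ℝ) < 4 * n + 3 := by linarith [(Nat.cast_nonneg n : (0 : ℝ) ≤ n)]
  generalize (4 * n + 3 : ℝ) = L at h hL ⊢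
  have hπ := pi_pos
  have hδ : π / (2 * L) < π / 2 := div_lt_div_of_pos_left hπ (by norm_num) (by linarith)
  have hs : 0 < sin (π / (2 * L)) := sin_pos_of_pos_of_lt_pi (by positivity) (by linarith)
  have hc : 0 < cos (π / (2 * L)) :=
    cos_pos_of_mem_Ioo ⟨by linarith [div_pos hπ (by linarith : (0 : ℝ) < 2 * L)], hδ⟩
  have hhalf : cos (((φ - π) / L - (φ - 2 * π * k) / L) / 2) = cos (π / (2 * L)) := by
    rcases hk' with h | h <;> rw [h] <;> [rw [← cos_neg]; skip] <;> congr 1 <;> ring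
  rw [cos_add_cos, hhalf, show π / L = 2 * (π / (2 * L)) by ring, sin_two_mul,
    show ((φ - π) / L + (φ - 2 * π * k) / L) / 2 = (φ - (2 * k + 1) * π / 2) / L by ring] at h
  have h' : sin (π / (2 * L)) * halfFillingEnergy n φ
      = -2 * sin (π * (2 * n + 1) / L) * cos ((φ - (2 * k + 1) * π / 2) / L) :=
    mul_left_cancel₀ (by positivity : 2 * cos (π / (2 * L)) ≠ 0) (by linear_combination h)
  apply mul_left_cancel₀ hs.ne'
  rw [h']
  field_simp

theorem halfFillingEnergy_min (n : ℕ) {φ : ℝ} (hφ : φ ∈ Set.Icc 0 (2 * π)) :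
    halfFillingEnergy n (π / 2) ≤ halfFillingEnergy n φ ∧
      (halfFillingEnergy n φ = halfFillingEnergy n (π / 2) ↔ φ = π / 2 ∨ φ = 3 * π / 2) := by
  have hπ := pi_pos
  have hL : (0 : ℝ) < 4 * n + 3 := by positivity
  set K := 2 * sin (π * (2 * n + 1) / (4 * n + 3)) / sin (π / (2 * (4 * n + 3)))
  have hK : 0 < K := by
    refine div_pos (mul_pos two_pos (sin_pos_of_pos_of_lt_pi (by positivity) ?_))
      (sin_pos_of_pos_of_lt_pi (by positivity) ?_)
    · rw [div_lt_iff₀ hL]; nlinarith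
    · rw [div_lt_iff₀ (by positivity)]; nlinarith
  have hmin : halfFillingEnergy n (π / 2) = -K := by
    rw [halfFillingEnergy_eq n (k := 0) (by simp) (by simpa using (half_pos hπ).le)]; simp [K]
  obtain ⟨k, hk, hφk⟩ : ∃ k : ℤ, (k = 0 ∨ k = 1) ∧ |φ - (2 * k + 1) * π / 2| ≤ π / 2 := by
    rcases le_or_gt φ π with h | h
    · exact ⟨0, by simp, by rw [abs_le]; push_cast; constructor <;> linarith [hφ.1]⟩
    · exact ⟨1, by simp, by rw [abs_le]; push_cast; constructor <;> linarith [hφ.2]⟩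
  rw [halfFillingEnergy_eq n hk hφk, hmin]
  set x := (φ - (2 * k + 1) * π / 2) / (4 * n + 3)
  have hx : |x| < 2 * π := by
    rw [abs_div, abs_of_pos hL, div_lt_iff₀ hL]; nlinarith
  refine ⟨by nlinarith [cos_le_one x], ?_⟩
  calc -K * cos x = -K ↔ cos x = 1 := by constructor <;> intro h <;> [nlinarith; rw [h, mul_one]]
    _ ↔ x = 0 := cos_eq_one_iff_of_lt_of_lt (by linarith [neg_abs_le x]) (by linarith [le_abs_self x])
    _ ↔ φ = (2 * k + 1) * π / 2 := by rw [div_eq_zero_iff, sub_eq_zero]; simp [hL.ne']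
    _ ↔ φ = π / 2 ∨ φ = 3 * π / 2 := by
      rw [abs_le] at hφk
      rcases hk with rfl | rfl <;> push_cast at hφk ⊢ <;>
        refine ⟨fun h => ?_, fun h => by rcases h with h | h <;> linarith⟩
      · exact Or.inl (by linarith)
      · exact Or.inr (by linarith)

theorem stmt_16_general (n : ℕ) (L : ℕ) (hL : L = 4 * n + 3)
    (E : ℝ → ℝ) (hE : ∀ φ, E φ = ringEnergy L (2 * n + 2) φ + ringEnergy L (2 * n + 1) φ) :
    {φ ∈ Set.Ico (0 : ℝ) (2 * π) | ∀ ψ ∈ Set.Ico (0 : ℝ) (2 * π), E φ ≤ E ψ}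
      = {π / 2, 3 * π / 2} := by
  obtain rfl : E = halfFillingEnergy n := funext fun φ => by rw [hE, hL, halfFillingEnergy]
  have hπ := pi_pos
  ext φ
  simp only [Set.mem_ofPred_eq, Set.mem_insert_iff, Set.mem_singleton_iff]
  constructor
  · rintro ⟨hφ, hmin⟩
    have h := halfFillingEnergy_min n (Set.Ico_subset_Icc_self hφ)
    exact h.2.mp (le_antisymm (hmin _ ⟨by positivity, by linarith⟩) h.1)
  · intro hφ
    have hmem : φ ∈ Set.Ico 0 (2 * π) := by
      rcases hφ with rfl | rfl <;> constructor <;> linarith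
    refine ⟨hmem, fun ψ hψ => ?_⟩
    rw [(halfFillingEnergy_min n (Set.Ico_subset_Icc_self hmem)).2.mpr hφ]
    exact (halfFillingEnergy_min n (Set.Ico_subset_Icc_self hψ)).1

theorem stmt_16 (n : ℕ) (hn : 1 ≤ n) (L : ℕ) (hL : L = 4 * n + 3)
    (E : ℝ → ℝ) (hE : ∀ φ, E φ = ringEnergy L (2 * n + 2) φ + ringEnergy L (2 * n + 1) φ) :
    {φ ∈ Set.Ico (0 : ℝ) (2 * π) | ∀ ψ ∈ Set.Ico (0 : ℝ) (2 * π), E φ ≤ E ψ}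
      = {π / 2, 3 * π / 2} :=
  stmt_16_general n L hL E hE
end
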